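/- Let m and k be positive integers with m > 2k+5, let ε > 0, and let α ∈ ℝ. If there exists an m-piecewise constant function f : ℝ → {−1, 1} such that |E_{z∼N(0,1)}[f(z)·z^t]| < ε for every integer 0 ≤ t ≤ k and E_{z∼N(0,1)}[f(z)·ReLU(z)] > α, then there exists an at most (2k+5)-piecewise constant function g : ℝ → {−1, 1} such that |E_{z∼N(0,1)}[g(z)·z^t]| < ε for every integer 0 ≤ t ≤ k and E_{z∼N(0,1)}[g(z)·ReLU(z)] > α. -/

import Mathlib

/-!
Perturb the ReLU to `Φ = ReLU + β exp` with `β > 0` small; the exponential term keeps `Φ - P`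
from vanishing on an interval for every polynomial `P`. Minimize, over coefficient vectors `l` of
polynomials `P` of degree `≤ k`, the penalized error `∑ᵢ eᵢ |lᵢ| + E |Φ - P|`, where
`|E f zⁱ| < eᵢ < ε`. The first-order conditions at a minimizer say that `g = sign (Φ - P)`
satisfies `|E g zⁱ| ≤ eᵢ` and `lᵢ E g zⁱ = eᵢ |lᵢ|`, hence `E f Φ ≤ ∑ᵢ eᵢ |lᵢ| + E |Φ - P| = E g Φ`,
and since `β` is small, `g` still beats `α` against the ReLU. A zero of `Φ - P` solves
`β eˣ = P(x) - x` or `β eˣ = P(x)`, which by Rolle's theorem have at most `k + 2` and `k + 1`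
solutions, so `g` has at most `2k + 3` breakpoints.
-/

open MeasureTheory ProbabilityTheory Real Filter Topology Set Polynomial

/-- A function `f : ℝ → ℝ` is `m`-piecewise constant if there exist at most `m - 1`
breakpoints such that `f` is constant on each open interval of their complement. -/
def PiecewiseConst (m : ℕ) (f : ℝ → ℝ) : Prop :=
  ∃ n : ℕ, n ≤ m - 1 ∧ ∃ z : Fin n → ℝ,
    ∀ x y : ℝ, x ≤ y → (∀ i, z i ∉ Set.Icc x y) → f x = f y

/-- Unlike `SignType.sign`, `sgn` never vanishes, so `sgn ∘ F` is `±1`-valued. -/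
noncomputable def sgn (x : ℝ) : ℝ := if 0 ≤ x then 1 else -1

theorem sgn_eq_one_or_eq_neg_one (x : ℝ) : sgn x = 1 ∨ sgn x = -1 := by
  unfold sgn; split_ifs <;> simp

theorem measurable_sgn : Measurable sgn :=
  Measurable.ite measurableSet_Ici measurable_const measurable_const

theorem norm_sgn_le_one (x : ℝ) : ‖sgn x‖ ≤ 1 := by
  unfold sgn; split_ifs <;> simp

theorem sgn_mul_self (x : ℝ) : sgn x * x = |x| := by
  rcases le_or_gt 0 x with hx | hx
  · simp [sgn, hx, abs_of_nonneg hx]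
  · simp [sgn, not_le.2 hx, abs_of_neg hx]

theorem sign_eq_sgn {x : ℝ} (hx : x ≠ 0) : (SignType.sign x : ℝ) = sgn x := by
  rcases hx.lt_or_gt with hx | hx
  · simp [sgn, hx, not_le.2 hx]
  · simp [sgn, hx, hx.le]

theorem HasDerivAt.abs_le_of_isLocalMin_add_mul_abs {φ : ℝ → ℝ} {d e : ℝ}
    (hφ : HasDerivAt φ d 0) (hmin : IsLocalMin (fun s => φ s + e * |s|) 0) : |d| ≤ e := by
  have hslope : ∀ᶠ t in 𝓝 0, -(e * |t|) ≤ φ (0 + t) - φ 0 := by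
    filter_upwards [hmin] with t ht
    simp only [abs_zero, mul_zero, add_zero, zero_add] at ht ⊢
    linarith
  refine abs_le.2 ⟨ge_of_tendsto hφ.tendsto_slope_zero_right ?_,
    le_of_tendsto hφ.tendsto_slope_zero_left ?_⟩
  · filter_upwards [nhdsWithin_le_nhds hslope, self_mem_nhdsWithin] with t ht (htpos : 0 < t)
    rw [smul_eq_mul, le_inv_mul_iff₀ htpos]
    rw [abs_of_pos htpos] at ht
    linarith
  · filter_upwards [nhdsWithin_le_nhds hslope, self_mem_nhdsWithin] with t ht (htneg : t < 0)
    rw [smul_eq_mul, ← div_eq_inv_mul, div_le_iff_of_neg htneg]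
    rw [abs_of_neg htneg] at ht
    linarith

/-- First-order conditions: `D` lies in the subdifferential of `e |·|` at `a`. -/
theorem abs_le_and_mul_eq_of_isLocalMin {φ : ℝ → ℝ} {a e D : ℝ} (hφ : HasDerivAt φ (-D) 0)
    (he : 0 ≤ e) (hmin : IsLocalMin (fun s => φ s + e * |a + s|) 0) :
    |D| ≤ e ∧ a * D = e * |a| := by
  rcases eq_or_ne a 0 with rfl | ha
  · simp only [zero_add] at hmin
    simpa using hφ.abs_le_of_isLocalMin_add_mul_abs hmin
  · have habs : HasDerivAt (fun s => |a + s|) (SignType.sign a : ℝ) 0 :=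
      HasDerivAt.comp_const_add a 0 (by simpa using hasDerivAt_abs ha)
    have hD : D = e * SignType.sign a := by
      linarith [hmin.hasDerivAt_eq_zero (hφ.add (habs.const_mul e))]
    constructor
    · rw [hD, abs_mul, abs_of_nonneg he]
      rcases ha.lt_or_gt with h | h <;> simp [h]
    · rw [hD, mul_left_comm, self_mul_sign]

theorem hasDerivAt_integral_abs_sub_mul {α : Type*} [MeasurableSpace α] {μ : Measure α}
    {F G : α → ℝ} (hF : Integrable F μ) (hG : Integrable G μ) (hF0 : ∀ᵐ x ∂μ, F x ≠ 0) :
    HasDerivAt (fun s => ∫ x, |F x - s * G x| ∂μ) (-∫ x, sgn (F x) * G x ∂μ) 0 := by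
  have hint : ∀ s : ℝ, Integrable (fun x => |F x - s * G x|) μ :=
    fun s => (hF.sub (hG.const_mul s)).abs
  rw [hasDerivAt_iff_tendsto_slope_zero, ← integral_neg]
  refine (tendsto_integral_filter_of_dominated_convergence (fun x => |G x|)
    (F := fun t x => t⁻¹ * (|F x - (0 + t) * G x| - |F x - 0 * G x|)) ?_ ?_ hG.abs ?_).congr ?_
  · exact Eventually.of_forall fun t =>
      (((hint (0 + t)).sub (hint 0)).const_mul _).aestronglyMeasurable
  · filter_upwards [self_mem_nhdsWithin] with t (ht : t ≠ 0)
    refine Eventually.of_forall fun x => ?_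
    rw [norm_mul, norm_inv, Real.norm_eq_abs, Real.norm_eq_abs,
      inv_mul_le_iff₀ (abs_pos.2 ht), ← abs_mul]
    simpa using abs_abs_sub_abs_le_abs_sub (F x - t * G x) (F x)
  · filter_upwards [hF0] with x hx
    have hinner : HasDerivAt (fun s => F x - s * G x) (-G x) 0 := by
      simpa using ((hasDerivAt_id (0 : ℝ)).mul_const (G x)).const_sub (F x)
    have habs := (hasDerivAt_abs (by simpa using hx : F x - 0 * G x ≠ 0)).comp 0 hinner
    rw [zero_mul, sub_zero, sign_eq_sgn hx] at habs
    simpa using habs.tendsto_slope_zero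
  · intro t
    simp only [smul_eq_mul]
    rw [integral_const_mul, integral_sub (hint _) (hint 0)]

theorem Fintype.sum_apply_update {ι β M : Type*} [Fintype ι] [DecidableEq ι] [AddCommGroup M]
    (f : ι → β → M) (l : ι → β) (i : ι) (v : β) :
    ∑ j, f j (Function.update l i v j) = f i v - f i (l i) + ∑ j, f j (l j) := by
  rw [← Finset.add_sum_erase _ _ (Finset.mem_univ i),
    ← Finset.add_sum_erase _ _ (Finset.mem_univ i), Function.update_self,
    Finset.sum_congr rfl fun j hj => by rw [Function.update_of_ne (Finset.ne_of_mem_erase hj)]]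
  abel

section PenalizedL1

variable {α ι : Type*} [MeasurableSpace α] [Fintype ι] {μ : Measure α} {Φ : α → ℝ}
  {p : ι → α → ℝ} {e : ι → ℝ}

def approxResidual (Φ : α → ℝ) (p : ι → α → ℝ) (l : ι → ℝ) (x : α) : ℝ :=
  Φ x - ∑ i, l i * p i x

noncomputable def penalizedL1Error (μ : Measure α) (Φ : α → ℝ) (p : ι → α → ℝ) (e l : ι → ℝ) :
    ℝ :=
  ∑ i, e i * |l i| + ∫ x, |approxResidual Φ p l x| ∂μ

theorem integrable_approxResidual (hΦ : Integrable Φ μ) (hp : ∀ i, Integrable (p i) μ) (l : ι → ℝ) :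
    Integrable (approxResidual Φ p l) μ :=
  hΦ.sub (integrable_finsetSum _ fun i _ => (hp i).const_mul (l i))

theorem continuous_penalizedL1Error (hΦ : Integrable Φ μ) (hp : ∀ i, Integrable (p i) μ) :
    Continuous (penalizedL1Error μ Φ p e) := by
  refine (continuous_finsetSum _ fun i _ => continuous_const.mul (continuous_apply i).abs).add
    (continuous_iff_continuousAt.2 fun l₀ => continuousAt_of_dominated
      (bound := fun x => |Φ x| + ∑ i, (|l₀ i| + 1) * |p i x|) ?_ ?_ ?_ ?_)
  · exact Eventually.of_forall fun l => (integrable_approxResidual hΦ hp l).abs.aestronglyMeasurable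
  · filter_upwards [Metric.ball_mem_nhds l₀ one_pos] with l hl
    refine Eventually.of_forall fun x => ?_
    have hcoord : ∀ i, |l i| ≤ |l₀ i| + 1 := fun i => by
      have := (dist_le_pi_dist l l₀ i).trans_lt hl
      rw [Real.dist_eq] at this
      linarith [abs_sub_abs_le_abs_sub (l i) (l₀ i)]
    rw [Real.norm_eq_abs, abs_abs, approxResidual]
    refine (abs_sub _ _).trans (add_le_add_right ((Finset.abs_sum_le_sum_abs _ _).trans
      (Finset.sum_le_sum fun i _ => ?_)) _)
    rw [abs_mul]
    exact mul_le_mul_of_nonneg_right (hcoord i) (abs_nonneg _)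
  · exact hΦ.abs.add (integrable_finsetSum _ fun i _ => (hp i).abs.const_mul _)
  · exact Eventually.of_forall fun x => (continuous_const.sub (continuous_finsetSum _
      fun i _ => (continuous_apply i).mul continuous_const)).abs.continuousAt

theorem exists_forall_penalizedL1Error_le (hΦ : Integrable Φ μ) (hp : ∀ i, Integrable (p i) μ)
    (he : ∀ i, 0 < e i) : ∃ l₀, ∀ l, penalizedL1Error μ Φ p e l₀ ≤ penalizedL1Error μ Φ p e l := by
  refine (continuous_penalizedL1Error hΦ hp).exists_forall_le ?_
  rw [← Filter.coprodᵢ_cocompact, Filter.coprodᵢ, tendsto_iSup]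
  intro i
  refine tendsto_atTop_mono (fun l => ?_)
    ((tendsto_norm_cocompact_atTop.const_mul_atTop (he i)).comp tendsto_comap)
  have hterm : e i * |l i| ≤ ∑ j, e j * |l j| :=
    Finset.single_le_sum (f := fun j => e j * |l j|)
      (fun j _ => mul_nonneg (he j).le (abs_nonneg _)) (Finset.mem_univ i)
  have hint : 0 ≤ ∫ x, |approxResidual Φ p l x| ∂μ := integral_nonneg fun x => abs_nonneg _
  simp only [Function.comp_apply, Function.eval, Real.norm_eq_abs, penalizedL1Error]
  linarith

theorem isLocalMin_of_forall_penalizedL1Error_le {l₀ : ι → ℝ}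
    (hmin : ∀ l, penalizedL1Error μ Φ p e l₀ ≤ penalizedL1Error μ Φ p e l) (i : ι) :
    IsLocalMin (fun s => ∫ x, |approxResidual Φ p l₀ x - s * p i x| ∂μ + e i * |l₀ i + s|) 0 := by
  classical
  refine Eventually.of_forall fun s => ?_
  have h := hmin (Function.update l₀ i (l₀ i + s))
  have hres : ∀ x, approxResidual Φ p (Function.update l₀ i (l₀ i + s)) x
      = approxResidual Φ p l₀ x - s * p i x := fun x => by
    simp only [approxResidual, Fintype.sum_apply_update (fun j c => c * p j x)]
    ring
  simp only [penalizedL1Error, hres, Fintype.sum_apply_update (fun j c => e j * |c|)] at h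
  simp only [zero_mul, sub_zero, add_zero]
  linarith

theorem abs_integral_sgn_mul_le_and_mul_eq (hΦ : Integrable Φ μ) (hp : ∀ i, Integrable (p i) μ)
    (he : ∀ i, 0 ≤ e i) {l₀ : ι → ℝ}
    (hmin : ∀ l, penalizedL1Error μ Φ p e l₀ ≤ penalizedL1Error μ Φ p e l)
    (hF0 : ∀ᵐ x ∂μ, approxResidual Φ p l₀ x ≠ 0) (i : ι) :
    |∫ x, sgn (approxResidual Φ p l₀ x) * p i x ∂μ| ≤ e i ∧
      l₀ i * ∫ x, sgn (approxResidual Φ p l₀ x) * p i x ∂μ = e i * |l₀ i| :=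
  abs_le_and_mul_eq_of_isLocalMin
    (hasDerivAt_integral_abs_sub_mul (integrable_approxResidual hΦ hp l₀) (hp i) hF0) (he i)
    (isLocalMin_of_forall_penalizedL1Error_le hmin i)

theorem integral_mul_eq_sum_add_integral_mul_approxResidual (hΦ : Integrable Φ μ)
    (hp : ∀ i, Integrable (p i) μ) {u : α → ℝ} (hu : AEStronglyMeasurable u μ)
    (hu1 : ∀ᵐ x ∂μ, ‖u x‖ ≤ 1) (l : ι → ℝ) :
    ∫ x, u x * Φ x ∂μ
      = ∑ i, l i * ∫ x, u x * p i x ∂μ + ∫ x, u x * approxResidual Φ p l x ∂μ := by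
  have hsplit (x : α) :
      u x * Φ x = ∑ i, l i * (u x * p i x) + u x * approxResidual Φ p l x := by
    simp only [approxResidual, mul_sub, Finset.mul_sum]
    ring_nf
  simp_rw [hsplit]
  rw [integral_add (integrable_finsetSum _ fun i _ => ((hp i).bdd_mul hu hu1).const_mul _)
    ((integrable_approxResidual hΦ hp l).bdd_mul hu hu1), integral_finsetSum _
    fun i _ => ((hp i).bdd_mul hu hu1).const_mul _]
  simp only [integral_const_mul]

theorem integral_mul_le_integral_sgn_approxResidual_mul (hΦ : Integrable Φ μ)
    (hp : ∀ i, Integrable (p i) μ) (he : ∀ i, 0 ≤ e i) {l₀ : ι → ℝ}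
    (hmin : ∀ l, penalizedL1Error μ Φ p e l₀ ≤ penalizedL1Error μ Φ p e l)
    (hF0 : ∀ᵐ x ∂μ, approxResidual Φ p l₀ x ≠ 0) {f : α → ℝ} (hf : AEStronglyMeasurable f μ)
    (hf1 : ∀ᵐ x ∂μ, ‖f x‖ ≤ 1) (hfp : ∀ i, |∫ x, f x * p i x ∂μ| ≤ e i) :
    ∫ x, f x * Φ x ∂μ ≤ ∫ x, sgn (approxResidual Φ p l₀ x) * Φ x ∂μ := by
  have hg : AEStronglyMeasurable (fun x => sgn (approxResidual Φ p l₀ x)) μ :=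
    (measurable_sgn.comp_aemeasurable
      (integrable_approxResidual hΦ hp l₀).aemeasurable).aestronglyMeasurable
  rw [integral_mul_eq_sum_add_integral_mul_approxResidual hΦ hp hf hf1 l₀,
    integral_mul_eq_sum_add_integral_mul_approxResidual hΦ hp hg
      (Eventually.of_forall fun x => norm_sgn_le_one _) l₀]
  simp only [(abs_integral_sgn_mul_le_and_mul_eq hΦ hp he hmin hF0 _).2, sgn_mul_self]
  refine add_le_add (Finset.sum_le_sum fun i _ => ?_) ?_
  · calc l₀ i * ∫ x, f x * p i x ∂μ ≤ |l₀ i| * |∫ x, f x * p i x ∂μ| := by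
          rw [← abs_mul]; exact le_abs_self _
      _ ≤ e i * |l₀ i| := by rw [mul_comm]; exact mul_le_mul_of_nonneg_right (hfp i) (abs_nonneg _)
  · refine integral_mono_ae ((integrable_approxResidual hΦ hp l₀).bdd_mul hf hf1)
      (integrable_approxResidual hΦ hp l₀).abs ?_
    filter_upwards [hf1] with x hx
    calc f x * approxResidual Φ p l₀ x ≤ |f x| * |approxResidual Φ p l₀ x| := by
          rw [← abs_mul]; exact le_abs_self _
      _ ≤ |approxResidual Φ p l₀ x| := mul_le_of_le_one_left (abs_nonneg _) (by simpa using hx)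

end PenalizedL1

theorem encard_zeros_le_encard_zeros_deriv_add_one {f f' : ℝ → ℝ}
    (hf : ∀ x, HasDerivAt f (f' x) x) :
    {x | f x = 0}.encard ≤ {x | f' x = 0}.encard + 1 := by
  by_cases hT : {x | f' x = 0}.Infinite
  · simp [hT.encard_eq]
  rw [Set.not_infinite] at hT
  by_contra! hlt
  rw [hT.encard_eq_coe_toFinset_card] at hlt
  obtain ⟨s, hs, hcard⟩ := Set.exists_subset_encard_eq (Order.add_one_le_of_lt hlt)
  have hsfin : s.Finite := Set.finite_of_encard_eq_coe hcard
  have hrolle := Finset.card_le_of_interleaved (s := hsfin.toFinset) (t := hT.toFinset)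
    fun x hx y hy hxy _ => by
      simp only [Set.Finite.mem_toFinset] at hx hy ⊢
      obtain ⟨c, hc, hc0⟩ := exists_hasDerivAt_eq_zero hxy
        (fun z _ => (hf z).continuousAt.continuousWithinAt) ((hs hx).trans (hs hy).symm)
        (fun z _ => hf z)
      exact ⟨c, hc0, hc⟩
  rw [hsfin.encard_eq_coe_toFinset_card] at hcard
  norm_cast at hcard
  omega

theorem encard_zeros_const_mul_exp_sub_eval_le {β : ℝ} (hβ : β ≠ 0) {n : ℕ} {q : ℝ[X]}
    (hq : q.natDegree ≤ n) : {x | β * exp x - q.eval x = 0}.encard ≤ n + 1 := by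
  induction n generalizing q with
  | zero =>
    obtain ⟨a, rfl⟩ := natDegree_eq_zero.1 (Nat.le_zero.1 hq)
    refine Set.encard_le_one_iff.2 fun x y hx hy => exp_injective (mul_left_cancel₀ hβ ?_)
    simp only [Set.mem_ofPred_eq, eval_C] at hx hy
    linarith
  | succ n ih =>
    calc _ ≤ {x | β * exp x - q.derivative.eval x = 0}.encard + 1 :=
          encard_zeros_le_encard_zeros_deriv_add_one fun x =>
            ((hasDerivAt_exp x).const_mul β).sub (q.hasDerivAt x)
      _ ≤ n + 1 + 1 := by
          gcongr
          exact ih ((natDegree_derivative_le q).trans (by omega))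
      _ = _ := by push_cast; ring

theorem PiecewiseConst.measurable {m : ℕ} {f : ℝ → ℝ} (hf : PiecewiseConst m f) :
    Measurable f := by
  obtain ⟨n, -, z, hz⟩ := hf
  refine measurable_of_countable_not_continuousAt ((Set.finite_range z).countable.mono ?_)
  intro x hx
  by_contra hxz
  obtain ⟨a, b, hab, hsub⟩ :=
    mem_nhds_iff_exists_Ioo_subset.1 ((Set.finite_range z).isClosed.isOpen_compl.mem_nhds hxz)
  refine hx ((continuousAt_const (y := f x)).congr (eventually_of_mem (Ioo_mem_nhds hab.1 hab.2)
    fun y hy => ?_))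
  have hfree : ∀ i, z i ∉ uIcc x y := fun i hi =>
    hsub ((ordConnected_Ioo).uIcc_subset hab hy hi) (mem_range_self i)
  rcases le_total x y with hxy | hyx
  · exact hz x y hxy (by simpa [uIcc_of_le hxy] using hfree)
  · exact (hz y x hyx (by simpa [uIcc_of_ge hyx] using hfree)).symm

theorem piecewiseConst_sgn_comp {F : ℝ → ℝ} (hF : Continuous F) {n : ℕ}
    (hzeros : {x | F x = 0}.encard ≤ n) : PiecewiseConst (n + 1) (fun x => sgn (F x)) := by
  have hfin := Set.finite_of_encard_le_coe hzeros
  refine ⟨hfin.toFinset.card, ?_, fun i => hfin.toFinset.equivFin.symm i, ?_⟩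
  · rw [hfin.encard_eq_coe_toFinset_card] at hzeros
    exact_mod_cast hzeros
  · intro x y hxy hfree
    by_contra hne
    have hsign : 0 ∈ uIcc (F x) (F y) := by
      simp only [sgn] at hne
      rw [mem_uIcc]
      split_ifs at hne with hx hy hy
      · exact absurd rfl hne
      · exact Or.inr ⟨(not_le.1 hy).le, hx⟩
      · exact Or.inl ⟨(not_le.1 hx).le, hy⟩
      · exact absurd rfl hne
    obtain ⟨w, hw, hw0⟩ := intermediate_value_uIcc hF.continuousOn hsign
    rw [uIcc_of_le hxy] at hw
    exact hfree (hfin.toFinset.equivFin ⟨w, hfin.mem_toFinset.2 hw0⟩) (by simpa using hw)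

theorem integral_mul_sub_le_of_integral_mul_add_le {α : Type*} [MeasurableSpace α]
    {μ : Measure α} {u v ψ w : α → ℝ} {β : ℝ} (hβ : 0 ≤ β) (hψ : Integrable ψ μ)
    (hw : Integrable w μ) (hu : AEStronglyMeasurable u μ) (hu1 : ∀ᵐ x ∂μ, ‖u x‖ ≤ 1)
    (hv : AEStronglyMeasurable v μ) (hv1 : ∀ᵐ x ∂μ, ‖v x‖ ≤ 1)
    (h : ∫ x, u x * (ψ x + β * w x) ∂μ ≤ ∫ x, v x * (ψ x + β * w x) ∂μ) :
    ∫ x, u x * ψ x ∂μ - 2 * β * ∫ x, |w x| ∂μ ≤ ∫ x, v x * ψ x ∂μ := by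
  have hsplit : ∀ u : α → ℝ, AEStronglyMeasurable u μ → (∀ᵐ x ∂μ, ‖u x‖ ≤ 1) →
      ∫ x, u x * (ψ x + β * w x) ∂μ = ∫ x, u x * ψ x ∂μ + β * ∫ x, u x * w x ∂μ ∧
        |∫ x, u x * w x ∂μ| ≤ ∫ x, |w x| ∂μ := fun u hu hu1 => by
    refine ⟨?_, ?_⟩
    · simp_rw [mul_add, mul_left_comm _ β]
      rw [integral_add (hψ.bdd_mul hu hu1) ((hw.bdd_mul hu hu1).const_mul β), integral_const_mul]
    · rw [← Real.norm_eq_abs]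
      refine norm_integral_le_of_norm_le hw.abs ?_
      filter_upwards [hu1] with x hx
      rw [norm_mul, Real.norm_eq_abs (w x)]
      exact mul_le_of_le_one_left (abs_nonneg _) hx
  obtain ⟨hu_eq, hu_le⟩ := hsplit u hu hu1
  obtain ⟨hv_eq, hv_le⟩ := hsplit v hv hv1
  rw [hu_eq, hv_eq] at h
  nlinarith [abs_le.1 hu_le, abs_le.1 hv_le]

theorem integrable_pow_gaussianReal (μ : ℝ) (v : NNReal) (n : ℕ) :
    Integrable (fun x => x ^ n) (gaussianReal μ v) :=
  integrable_pow_of_integrable_exp_mul (X := id) one_ne_zero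
    (by simpa using integrable_exp_mul_gaussianReal 1)
    (by simpa using integrable_exp_mul_gaussianReal (-1)) n

theorem integrable_exp_gaussianReal (μ : ℝ) (v : NNReal) : Integrable exp (gaussianReal μ v) := by
  simpa using integrable_exp_mul_gaussianReal (μ := μ) (v := v) 1

theorem integrable_relu_gaussianReal (μ : ℝ) (v : NNReal) :
    Integrable (fun x => max x 0) (gaussianReal μ v) := by
  simpa using (integrable_pow_gaussianReal μ v 1).pos_part

theorem encard_zeros_relu_add_exp_sub_eval_le {β : ℝ} (hβ : β ≠ 0) {k : ℕ} {q : ℝ[X]}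
    (hq : q.natDegree ≤ k) : {x | max x 0 + β * exp x - q.eval x = 0}.encard ≤ 2 * k + 3 := by
  have hqX : (q - X).natDegree ≤ k + 1 :=
    (natDegree_sub_le _ _).trans (max_le (hq.trans k.le_succ) (natDegree_X_le.trans (by omega)))
  calc _ ≤ ({x | β * exp x - (q - X).eval x = 0} ∪ {x | β * exp x - q.eval x = 0}).encard := by
        refine encard_le_encard fun x hx => ?_
        simp only [mem_ofPred_eq, mem_union, eval_sub, eval_X] at hx ⊢
        rcases le_total x 0 with h | h
        · rw [max_eq_right h] at hx; right; linarith
        · rw [max_eq_left h] at hx; left; linarith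
    _ ≤ (k + 1 + 1) + (k + 1) := (encard_union_le _ _).trans <| add_le_add
        (encard_zeros_const_mul_exp_sub_eval_le hβ hqX)
        (encard_zeros_const_mul_exp_sub_eval_le hβ hq)
    _ = 2 * k + 3 := by ring

theorem encard_zeros_approxResidual_relu_add_exp_le {β : ℝ} (hβ : β ≠ 0) {k : ℕ}
    (l : Fin (k + 1) → ℝ) :
    {x | approxResidual (fun x => max x 0 + β * exp x)
        (fun (i : Fin (k + 1)) x => x ^ (i : ℕ)) l x = 0}.encard ≤ 2 * k + 3 := by
  have hq : (∑ i : Fin (k + 1), C (l i) * X ^ (i : ℕ)).natDegree ≤ k :=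
    natDegree_sum_le_of_forall_le _ _ fun i _ =>
      (natDegree_C_mul_X_pow_le _ _).trans (Nat.lt_succ_iff.1 i.2)
  simpa [approxResidual, eval_finsetSum] using encard_zeros_relu_add_exp_sub_eval_le hβ hq

theorem exists_sgn_comp_optimal_relu_add_exp {k : ℕ} {β : ℝ} (hβ : 0 < β)
    {e : Fin (k + 1) → ℝ} (he : ∀ i, 0 < e i) :
    ∃ F : ℝ → ℝ, Continuous F ∧ {x | F x = 0}.encard ≤ 2 * k + 3 ∧
      (∀ i : Fin (k + 1), |∫ z, sgn (F z) * z ^ (i : ℕ) ∂(gaussianReal 0 1)| ≤ e i) ∧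
      ∀ f : ℝ → ℝ, AEStronglyMeasurable f (gaussianReal 0 1) → (∀ z, ‖f z‖ ≤ 1) →
        (∀ i : Fin (k + 1), |∫ z, f z * z ^ (i : ℕ) ∂(gaussianReal 0 1)| ≤ e i) →
        ∫ z, f z * (max z 0 + β * exp z) ∂(gaussianReal 0 1)
          ≤ ∫ z, sgn (F z) * (max z 0 + β * exp z) ∂(gaussianReal 0 1) := by
  have : NullSingletonClass (gaussianReal 0 1) := nullSingletonClass_gaussianReal one_ne_zero
  set Φ : ℝ → ℝ := fun x => max x 0 + β * exp x
  set p : Fin (k + 1) → ℝ → ℝ := fun i x => x ^ (i : ℕ)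
  have hΦ : Integrable Φ (gaussianReal 0 1) :=
    (integrable_relu_gaussianReal 0 1).add ((integrable_exp_gaussianReal 0 1).const_mul β)
  have hp (i : Fin (k + 1)) : Integrable (p i) (gaussianReal 0 1) :=
    integrable_pow_gaussianReal 0 1 i
  obtain ⟨l₀, hmin⟩ := exists_forall_penalizedL1Error_le hΦ hp he
  have hzeros := encard_zeros_approxResidual_relu_add_exp_le hβ.ne' l₀
  have hF0 : ∀ᵐ z ∂(gaussianReal 0 1), approxResidual Φ p l₀ z ≠ 0 := by
    simpa [ae_iff] using (finite_of_encard_le_coe hzeros).measure_zero (gaussianReal 0 1)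
  have hFcont : Continuous (approxResidual Φ p l₀) :=
    ((continuous_id.max continuous_const).add (continuous_const.mul continuous_exp)).sub
      (continuous_finsetSum _ fun i _ => continuous_const.mul (continuous_pow _))
  exact ⟨approxResidual Φ p l₀, hFcont, hzeros,
    fun i => (abs_integral_sgn_mul_le_and_mul_eq hΦ hp (fun i => (he i).le) hmin hF0 i).1,
    fun f hf hf1 hfp => integral_mul_le_integral_sgn_approxResidual_mul hΦ hp
      (fun i => (he i).le) hmin hF0 hf (Eventually.of_forall hf1) hfp⟩

theorem stmt10_general (m k : ℕ)
    (ε : ℝ) (α : ℝ)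
    (f : ℝ → ℝ) (hf_val : ∀ z, f z = 1 ∨ f z = -1) (hf_pc : PiecewiseConst m f)
    (hmom : ∀ t : ℕ, t ≤ k → |∫ z, f z * z ^ t ∂(gaussianReal 0 1)| < ε)
    (hcorr : α < ∫ z, f z * max z 0 ∂(gaussianReal 0 1)) :
    ∃ g : ℝ → ℝ, (∀ z, g z = 1 ∨ g z = -1) ∧ PiecewiseConst (2 * k + 5) g ∧
      (∀ t : ℕ, t ≤ k → |∫ z, g z * z ^ t ∂(gaussianReal 0 1)| < ε) ∧
      α < ∫ z, g z * max z 0 ∂(gaussianReal 0 1) := by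
  have hf1 (z : ℝ) : ‖f z‖ ≤ 1 := by rcases hf_val z with h | h <;> simp [h]
  have hfm := hf_pc.measurable.aestronglyMeasurable (μ := gaussianReal 0 1)
  choose e he using fun i : Fin (k + 1) => exists_between (hmom i (Nat.lt_succ_iff.1 i.2))
  obtain ⟨β, hβ, hβE⟩ := exists_pos_mul_lt (sub_pos.2 hcorr) (2 * ∫ z, |exp z| ∂(gaussianReal 0 1))
  obtain ⟨F, hFcont, hzeros, hFmom, hFcorr⟩ :=
    exists_sgn_comp_optimal_relu_add_exp hβ fun i => (abs_nonneg _).trans_lt (he i).1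
  refine ⟨fun z => sgn (F z), fun z => sgn_eq_one_or_eq_neg_one _,
    piecewiseConst_sgn_comp hFcont (hzeros.trans (by norm_cast; omega)),
    fun t ht => (hFmom ⟨t, Nat.lt_succ_of_le ht⟩).trans_lt (he _).2, ?_⟩
  have := integral_mul_sub_le_of_integral_mul_add_le (v := fun z => sgn (F z)) hβ.le
    (integrable_relu_gaussianReal 0 1) (integrable_exp_gaussianReal 0 1) hfm
    (Eventually.of_forall hf1) (measurable_sgn.comp hFcont.measurable).aestronglyMeasurable
    (Eventually.of_forall fun z => norm_sgn_le_one _) (hFcorr f hfm hf1 fun i => (he i).1.le)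
  linarith

/-- If `m > 2k + 5` and there is an `m`-piecewise constant `f : ℝ → {-1, 1}` whose
Gaussian moments of degree `≤ k` are `< ε` in absolute value and whose Gaussian
correlation with `ReLU` exceeds `α`, then there is an at most `(2k+5)`-piecewise
constant `g : ℝ → {-1, 1}` with the same properties. -/
theorem stmt10 (m k : ℕ) (hm : 0 < m) (hk : 0 < k) (hmk : 2 * k + 5 < m)
    (ε : ℝ) (hε : 0 < ε) (α : ℝ)
    (f : ℝ → ℝ) (hf_val : ∀ z, f z = 1 ∨ f z = -1) (hf_pc : PiecewiseConst m f)
    (hmom : ∀ t : ℕ, t ≤ k → |∫ z, f z * z ^ t ∂(gaussianReal 0 1)| < ε)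
    (hcorr : α < ∫ z, f z * max z 0 ∂(gaussianReal 0 1)) :
    ∃ g : ℝ → ℝ, (∀ z, g z = 1 ∨ g z = -1) ∧ PiecewiseConst (2 * k + 5) g ∧
      (∀ t : ℕ, t ≤ k → |∫ z, g z * z ^ t ∂(gaussianReal 0 1)| < ε) ∧
      α < ∫ z, g z * max z 0 ∂(gaussianReal 0 1) :=
  stmt10_general m k ε α f hf_val hf_pc hmom hcorr
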